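/- Let E be a real Banach space, Ω ⊆ E an open set, f : E → E Fréchet differentiable on Ω with derivative f', and x* ∈ Ω with f(x*) = 0, such that f' is continuous (in operator norm) at x* and f'(x*) is invertible. Then there exists δ > 0 with B_δ(x*) ⊆ Ω such that f'(x) is invertible for every x ∈ B_δ(x*), and every sequence (x_k) with x_0 ∈ B_δ(x*) satisfying x_{k+1} = x_k − f'(x_k)⁻¹ (f x_k) for all k satisfies ‖x_{k+1} − x*‖ ≤ (1/2) ‖x_k − x*‖ for all k, and hence ‖x_k − x*‖ ≤ 2^{−k} ‖x_0 − x*‖ for all k; in particular x_k → x*. -/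

import Mathlib

/-!
Near a zero `z` of `f` with `f' z` invertible, the Newton step `N y = y - (f' y)⁻¹ (f y)`
satisfies `N y - z = (f' y)⁻¹ ((f' y - f' z) (y - z) - (f y - f z - f' z (y - z)))`.
The inverse stays bounded near `z`, and both terms in parentheses are `o(y - z)`: the first by
continuity of `f'` at `z`, the second by differentiability of `f` at `z`. Hence
`‖N y - z‖ ≤ ½ ‖y - z‖` on a small ball, which the iterates therefore never leave.
-/

open Filter Topology Asymptotics

namespace Asymptotics

variable {α 𝕜 E F G : Type*} [NontriviallyNormedField 𝕜] [NormedAddCommGroup E] [NormedSpace 𝕜 E]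
  [NormedAddCommGroup F] [NormedSpace 𝕜 F] [NormedAddCommGroup G]
  {l : Filter α} {A : α → E →L[𝕜] F} {v : α → E} {g : α → G}

theorem IsBigO.clm_apply_isLittleO (hA : A =O[l] fun _ => (1 : ℝ)) (hv : v =o[l] g) :
    (fun x => A x (v x)) =o[l] g := by
  have h := isBoundedBilinearMap_apply.isBigO_comp.trans_isLittleO
    (hA.norm_left.mul_isLittleO hv.norm_norm)
  simpa only [one_mul, isLittleO_norm_right] using h

theorem IsLittleO.clm_apply_isBigO (hA : A =o[l] fun _ => (1 : ℝ)) (hv : v =O[l] g) :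
    (fun x => A x (v x)) =o[l] g := by
  have h := isBoundedBilinearMap_apply.isBigO_comp.trans_isLittleO
    (hA.norm_left.mul_isBigO hv.norm_norm)
  simpa only [one_mul, isLittleO_norm_right] using h

end Asymptotics

section Newton

variable {𝕜 E F : Type*} [NontriviallyNormedField 𝕜] [NormedAddCommGroup E] [NormedSpace 𝕜 E]
  [NormedAddCommGroup F] [NormedSpace 𝕜 F]

theorem ContinuousAt.eventually_isInvertible [CompleteSpace E] {f' : E → E →L[𝕜] F} {z : E}
    (hcont : ContinuousAt f' z) (hinv : (f' z).IsInvertible) :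
    ∀ᶠ y in 𝓝 z, (f' y).IsInvertible := by
  obtain ⟨e, he⟩ := hinv
  exact hcont.eventually_mem (he ▸ ContinuousLinearEquiv.nhds e)

/-- Where `f' y` is not invertible, `inverse` returns `0` and the step does not move. -/
noncomputable def newtonMap (f : E → F) (f' : E → E →L[𝕜] F) (y : E) : E :=
  y - (f' y).inverse (f y)

theorem newtonMap_sub {f : E → F} {f' : E → E →L[𝕜] F} {y : E} (hy : (f' y).IsInvertible)
    (z : E) : newtonMap f f' y - z = (f' y).inverse (f' y (y - z) - f y) := by
  rw [newtonMap, map_sub, hy.inverse_apply_self]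
  abel

theorem newtonMap_sub_isLittleO [CompleteSpace E] {f : E → F} {f' : E → E →L[𝕜] F} {z : E}
    (hdiff : HasFDerivAt f (f' z) z) (hcont : ContinuousAt f' z) (hinv : (f' z).IsInvertible)
    (hzero : f z = 0) :
    (fun y => newtonMap f f' y - z) =o[𝓝 z] fun y => y - z := by
  have hinv_bdd : (fun y => (f' y).inverse) =O[𝓝 z] fun _ => (1 : ℝ) :=
    ((hinv.contDiffAt_map_inverse (n := 0)).continuousAt.comp hcont).tendsto.isBigO_one ℝ
  have hderiv_small : (fun y => f' y - f' z) =o[𝓝 z] fun _ => (1 : ℝ) :=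
    (isLittleO_one_iff ℝ).2 (tendsto_sub_nhds_zero_iff.2 hcont)
  have hresidual : (fun y => f' y (y - z) - f y) =o[𝓝 z] fun y => y - z := by
    have h := (hderiv_small.clm_apply_isBigO (isBigO_refl (fun y => y - z) _)).sub
      hdiff.isLittleO
    refine h.congr_left fun y => ?_
    simp only [sub_apply, hzero, sub_zero]
    abel
  refine (hinv_bdd.clm_apply_isLittleO hresidual).congr' ?_ EventuallyEq.rfl
  filter_upwards [hcont.eventually_isInvertible hinv] with y hy
  exact (newtonMap_sub hy z).symm

end Newton

section Contraction

variable {E : Type*} [SeminormedAddCommGroup E] {T : E → E} {z : E} {δ q : ℝ} {x : ℕ → E}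

theorem mem_ball_of_contracting (hT : ∀ y ∈ Metric.ball z δ, ‖T y - z‖ ≤ q * ‖y - z‖)
    (hq : q ≤ 1) (hx : ∀ k, x (k + 1) = T (x k)) (hx0 : x 0 ∈ Metric.ball z δ) :
    ∀ k, x k ∈ Metric.ball z δ := by
  intro k
  induction k with
  | zero => exact hx0
  | succ k ih =>
    rw [mem_ball_iff_norm] at ih ⊢
    calc ‖x (k + 1) - z‖ ≤ q * ‖x k - z‖ := hx k ▸ hT (x k) (mem_ball_iff_norm.2 ih)
      _ ≤ ‖x k - z‖ := mul_le_of_le_one_left (norm_nonneg _) hq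
      _ < δ := ih

theorem norm_sub_le_pow_mul_of_contracting (hstep : ∀ k, ‖x (k + 1) - z‖ ≤ q * ‖x k - z‖)
    (hq : 0 ≤ q) (k : ℕ) : ‖x k - z‖ ≤ q ^ k * ‖x 0 - z‖ := by
  induction k with
  | zero => simp
  | succ k ih =>
    calc ‖x (k + 1) - z‖ ≤ q * ‖x k - z‖ := hstep k
      _ ≤ q * (q ^ k * ‖x 0 - z‖) := by gcongr
      _ = q ^ (k + 1) * ‖x 0 - z‖ := by ring

theorem tendsto_of_norm_sub_le_pow_mul (hbound : ∀ k, ‖x k - z‖ ≤ q ^ k * ‖x 0 - z‖)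
    (hq₀ : 0 ≤ q) (hq₁ : q < 1) : Tendsto x atTop (𝓝 z) := by
  rw [tendsto_iff_norm_sub_tendsto_zero]
  have hlim := (tendsto_pow_atTop_nhds_zero_of_lt_one hq₀ hq₁).mul_const ‖x 0 - z‖
  rw [zero_mul] at hlim
  exact squeeze_zero (fun k => norm_nonneg _) hbound hlim

end Contraction

/-- Geometric (rate 1/2) convergence of the Newton sequence: on a suitable ball around the
solution the derivative is invertible and each Newton step halves the distance to the
solution, whence `‖x_k - x*‖ ≤ 2⁻ᵏ ‖x_0 - x*‖` and `x_k → x*`. -/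
theorem newton_geometric_convergence
    {E : Type*} [NormedAddCommGroup E] [NormedSpace ℝ E] [CompleteSpace E]
    {Ω : Set E} (hΩ : IsOpen Ω) (f : E → E) (f' : E → (E →L[ℝ] E))
    (hdiff : ∀ x ∈ Ω, HasFDerivAt f (f' x) x)
    {xstar : E} (hx : xstar ∈ Ω) (hsol : f xstar = 0)
    (hcont : ContinuousAt f' xstar)
    (hinv : ∃ e : E ≃L[ℝ] E, (e : E →L[ℝ] E) = f' xstar) :
    ∃ δ > 0, Metric.ball xstar δ ⊆ Ω ∧
      (∀ x ∈ Metric.ball xstar δ, ∃ e : E ≃L[ℝ] E, (e : E →L[ℝ] E) = f' x) ∧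
      ∀ x : ℕ → E, x 0 ∈ Metric.ball xstar δ →
        (∀ k : ℕ, x (k + 1) = x k - (f' (x k)).inverse (f (x k))) →
        (∀ k : ℕ, ‖x (k + 1) - xstar‖ ≤ (1 / 2) * ‖x k - xstar‖) ∧
        (∀ k : ℕ, ‖x k - xstar‖ ≤ (1 / 2) ^ k * ‖x 0 - xstar‖) ∧
        Tendsto x atTop (𝓝 xstar) := by
  have hhalving := (newtonMap_sub_isLittleO (hdiff xstar hx) hcont hinv hsol).def one_half_pos
  obtain ⟨δ, hδ, hball⟩ := Metric.eventually_nhds_iff_ball.mp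
    ((hΩ.eventually_mem hx).and ((hcont.eventually_isInvertible hinv).and hhalving))
  refine ⟨δ, hδ, fun y hy => (hball y hy).1, fun y hy => (hball y hy).2.1, fun x hx0 hrec => ?_⟩
  have hT : ∀ y ∈ Metric.ball xstar δ, ‖newtonMap f f' y - xstar‖ ≤ 1 / 2 * ‖y - xstar‖ :=
    fun y hy => (hball y hy).2.2
  have hmem := mem_ball_of_contracting hT (by norm_num) hrec hx0
  have hstep k : ‖x (k + 1) - xstar‖ ≤ 1 / 2 * ‖x k - xstar‖ := hrec k ▸ hT (x k) (hmem k)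
  have hbound := norm_sub_le_pow_mul_of_contracting hstep (by norm_num)
  exact ⟨hstep, hbound, tendsto_of_norm_sub_le_pow_mul hbound (by norm_num) (by norm_num)⟩
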